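/- arXiv:2001.05432 — 3 statements merged into one kernel-verified Lean document; each statement's English description precedes it below -/
import Mathlib

section
/- For a small category A, the following are equivalent: (1) A has a discrete final (cofinal) full subcategory; (2) A has a reflective discrete full subcategory; (3) the connected-component functor A ⟶ π₀(A) (viewing the set of connected components as a discrete category) has a right adjoint; (4) A is equivalent to a coproduct (disjoint union) of categories each of which has a terminal object. -/
open CategoryTheory

universe u

/-- A full subcategory (given by a predicate on objects) is discrete if the only
morphisms of `A` between its objects are identities (up to `eqToHom`). -/
def IsDiscreteFullSubcat {A : Type u} [SmallCategory A] (Z : A → Prop) : Prop :=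
  ∀ (x y : ObjectProperty.FullSubcategory Z) (f : x.obj ⟶ y.obj), ∃ h : x.obj = y.obj, f = eqToHom h

variable {A : Type u} [SmallCategory A]

abbrev cmk {A : Type u} [SmallCategory A] (a : A) : ConnectedComponents A := Quotient.mk (Zigzag.setoid A) a

def CatStar (A : Type u) [SmallCategory A] : Prop :=
  ∀ c : ConnectedComponents A, ∃ t : A, Quotient.mk (Zigzag.setoid A) t = c ∧
    ∀ a : A, Quotient.mk (Zigzag.setoid A) a = c → Nonempty (a ⟶ t) ∧ Subsingleton (a ⟶ t)

-- choice form of CatStar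
lemma CatStar.exists_fun (h : CatStar A) :
    ∃ t : ConnectedComponents A → A, ∀ c, cmk (t c) = c ∧
      ∀ a : A, cmk a = c → Nonempty (a ⟶ t c) ∧ Subsingleton (a ⟶ t c) := by
  choose t h1 h2 using h
  exact ⟨t, fun c => ⟨h1 c, h2 c⟩⟩

lemma hom_mk_eq {a b : A} (f : a ⟶ b) : cmk a = cmk b :=
  Quotient.sound (Zigzag.of_hom f)

section star_fun
variable (t : ConnectedComponents A → A)
  (ht : ∀ c, cmk (t c) = c ∧
      ∀ a : A, cmk a = c → Nonempty (a ⟶ t c) ∧ Subsingleton (a ⟶ t c))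

include ht

lemma sub_hom (a : A) (c : ConnectedComponents A) : Subsingleton (a ⟶ t c) := by
  constructor
  intro f g
  have hc : cmk a = c := (hom_mk_eq f).trans (ht c).1
  exact ((ht c).2 a hc).2.elim f g

lemma t_inj {c c' : ConnectedComponents A} (h : t c = t c') : c = c' := by
  rw [← (ht c).1, ← (ht c').1, h]

lemma star_discrete : IsDiscreteFullSubcat (fun a => ∃ c, t c = a) := by
  rintro ⟨x, cx, rfl⟩ ⟨y, cy, rfl⟩ f
  have : cx = cy := by
    rw [← (ht cx).1, ← (ht cy).1]
    exact hom_mk_eq f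
  subst this
  refine ⟨rfl, ?_⟩
  exact (sub_hom t ht _ _).elim f (eqToHom rfl)

lemma star_final : (ObjectProperty.ι (fun a : A => ∃ c, t c = a)).Final := by
  constructor
  intro a
  have hne : Nonempty (StructuredArrow a (ObjectProperty.ι fun a : A => ∃ c, t c = a)) :=
    ⟨StructuredArrow.mk (Y := (⟨t (cmk a), cmk a, rfl⟩ : ObjectProperty.FullSubcategory (fun a : A => ∃ c, t c = a)))
      ((ht (cmk a)).2 a rfl).1.some⟩
  apply zigzag_isConnected
  rintro ⟨⟨⟨⟩⟩, ⟨y1, c1, rfl⟩, f1⟩ ⟨⟨⟨⟩⟩, ⟨y2, c2, rfl⟩, f2⟩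
  have e1 : cmk a = c1 := (hom_mk_eq f1).trans (ht c1).1
  have e2 : cmk a = c2 := (hom_mk_eq f2).trans (ht c2).1
  obtain rfl : c1 = c2 := e1.symm.trans e2
  refine Zigzag.of_hom (StructuredArrow.homMk (𝟙 _) ?_)
  exact ((ht c1).2 a e1).2.elim _ _

end star_fun

lemma final_to_star (Z : A → Prop) (hd : IsDiscreteFullSubcat Z)
    (hf : (ObjectProperty.ι Z).Final) : CatStar A := by
  have conn : ∀ b : A, IsConnected (StructuredArrow b (ObjectProperty.ι Z)) := hf.out
  have key : ∀ (b : A) (o o' : StructuredArrow b (ObjectProperty.ι Z)),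
      o.right.obj = o'.right.obj := by
    intro b o o'
    have := conn b
    exact constant_of_preserves_morphisms
      (J := StructuredArrow b (ObjectProperty.ι Z)) (fun o => o.right.obj)
      (fun j k f => (hd j.right k.right (CommaMorphism.right f).hom).1) o o'
  have hne : ∀ b : A, Nonempty (StructuredArrow b (ObjectProperty.ι Z)) :=
    fun b => (conn b).is_nonempty
  let ob : ∀ b : A, StructuredArrow b (ObjectProperty.ι Z) := fun b => (hne b).some
  let φ : A → A := fun b => (ob b).right.obj
  have hφhom : ∀ b : A, Nonempty (b ⟶ φ b) := fun b => ⟨(ob b).hom⟩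
  have hzag : ∀ {x y : A}, (x ⟶ y) → φ x = φ y := by
    intro x y f
    exact key x (ob x) (StructuredArrow.mk
      (f ≫ (ob y).hom : x ⟶ (ObjectProperty.ι Z).obj (ob y).right))
  have hconst : ∀ {x y : A}, Zigzag x y → φ x = φ y := by
    intro x y h
    induction h with
    | refl => rfl
    | tail _ hz ih =>
      cases hz with
      | inl h => exact ih.trans (hzag h.some)
      | inr h => exact ih.trans (hzag h.some).symm
  have hsub : ∀ (a : A) (f g : a ⟶ φ a), f = g := by
    intro a f g
    have := conn a
    have hcst := constant_of_preserves_morphisms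
      (J := StructuredArrow a (ObjectProperty.ι Z))
      (fun o => o.hom ≫ eqToHom (key a o (ob a))) ?_
      (StructuredArrow.mk (Y := (ob a).right) f) (StructuredArrow.mk (Y := (ob a).right) g)
    · simpa using hcst
    · intro j k m
      rw [← StructuredArrow.w m]
      obtain ⟨h, hh⟩ := hd j.right k.right m.right.hom
      have : (ObjectProperty.ι Z).map m.right = eqToHom h := hh
      rw [this]
      simp
  intro c
  obtain ⟨b, rfl⟩ := Quotient.exists_rep c
  refine ⟨φ b, (hom_mk_eq (hφhom b).some).symm, fun a ha => ?_⟩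
  have hz : Zigzag a b := Quotient.exact ha
  have hφ : φ a = φ b := hconst hz
  constructor
  · exact hφ ▸ hφhom a
  · constructor
    intro f g
    have : ∀ f g : a ⟶ φ a, f = g := hsub a
    exact (cancel_mono (eqToHom hφ.symm)).1 (this (f ≫ eqToHom hφ.symm) (g ≫ eqToHom hφ.symm))

section star_fun2
variable (t : ConnectedComponents A → A)
  (ht : ∀ c, cmk (t c) = c ∧
      ∀ a : A, cmk a = c → Nonempty (a ⟶ t c) ∧ Subsingleton (a ⟶ t c))

include ht in
lemma sub_hom' (a : A) (z : ObjectProperty.FullSubcategory (fun a : A => ∃ c, t c = a)) :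
    Subsingleton (a ⟶ z.obj) := by
  obtain ⟨z, c, rfl⟩ := z
  exact sub_hom t ht a c

include ht in
lemma sub_homZ (x y : ObjectProperty.FullSubcategory (fun a : A => ∃ c, t c = a)) :
    Subsingleton (x ⟶ y) :=
  ⟨fun f g => ObjectProperty.hom_ext _ ((sub_hom' t ht x.obj y).elim _ _)⟩

noncomputable def starLft : A ⥤ ObjectProperty.FullSubcategory (fun a : A => ∃ c, t c = a) where
  obj a := ⟨t (cmk a), cmk a, rfl⟩
  map {a b} f := eqToHom (by apply ObjectProperty.FullSubcategory.ext; dsimp; rw [hom_mk_eq f])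
  map_id a := by simp
  map_comp f g := by simp

include ht in
lemma star_isRightAdjoint :
    (ObjectProperty.ι (fun a : A => ∃ c, t c = a)).IsRightAdjoint := by
  refine ⟨starLft t, ⟨Adjunction.mkOfUnitCounit ⟨?_, ?_, ?_, ?_⟩⟩⟩
  · -- unit
    exact
      { app := fun a => ((ht (cmk a)).2 a rfl).1.some
        naturality := fun a b f => by
          exact (sub_hom' t ht a ((starLft t).obj b)).elim _ _ }
  · -- counit
    exact
      { app := fun z => eqToHom (by
          obtain ⟨z, c, rfl⟩ := z
          show (⟨t (cmk (t c)), _⟩ : ObjectProperty.FullSubcategory _) = _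
          congr 1
          rw [(ht c).1]
          )
        naturality := fun x y f => (sub_homZ t ht _ _).elim _ _ }
  · ext a
    exact (sub_hom' t ht _ _).elim _ _
  · ext z
    exact (sub_hom' t ht _ _).elim _ _

end star_fun2

lemma isRightAdjoint_to_star (Z : A → Prop) (hd : IsDiscreteFullSubcat Z)
    (h : (ObjectProperty.ι Z).IsRightAdjoint) : CatStar A := by
  obtain ⟨L, ⟨adj⟩⟩ := h
  have hsubZ : ∀ x y : ObjectProperty.FullSubcategory Z, Subsingleton (x ⟶ y) := by
    intro x y
    constructor
    intro f g
    ext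
    obtain ⟨h1, e1⟩ := hd x y f.hom
    obtain ⟨h2, e2⟩ := hd x y g.hom
    rw [show f.hom = eqToHom h1 from e1, show g.hom = eqToHom h2 from e2]
  have hLconst : ∀ {x y : A}, Zigzag x y → L.obj x = L.obj y := by
    intro x y h
    induction h with
    | refl => rfl
    | tail _ hz ih =>
      refine ih.trans ?_
      cases hz with
      | inl h => exact ObjectProperty.FullSubcategory.ext (hd _ _ (L.map h.some).hom).1
      | inr h => exact (ObjectProperty.FullSubcategory.ext (hd _ _ (L.map h.some).hom).1).symm
  intro c
  obtain ⟨b, rfl⟩ := Quotient.exists_rep c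
  refine ⟨(L.obj b).obj, ?_, fun a ha => ?_⟩
  · exact (hom_mk_eq (adj.unit.app b)).symm
  · have hL : L.obj a = L.obj b := hLconst (Quotient.exact ha)
    constructor
    · exact ⟨adj.unit.app a ≫ eqToHom (congrArg ObjectProperty.FullSubcategory.obj hL)⟩
    · constructor
      intro f g
      have h1 := (hsubZ (L.obj a) (L.obj b)).elim
        ((adj.homEquiv a (L.obj b)).symm f) ((adj.homEquiv a (L.obj b)).symm g)
      have h2 := congrArg (adj.homEquiv a (L.obj b)) h1
      simpa using h2

section star_fun3
variable (t : ConnectedComponents A → A)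
  (ht : ∀ c, cmk (t c) = c ∧
      ∀ a : A, cmk a = c → Nonempty (a ⟶ t c) ∧ Subsingleton (a ⟶ t c))

include ht in
lemma star_isLeftAdjoint :
    (ConnectedComponents.functorToDiscrete (ConnectedComponents A)
      (id : ConnectedComponents A → ConnectedComponents A)).IsLeftAdjoint := by
  refine ⟨Discrete.functor t, ⟨Adjunction.mkOfUnitCounit ⟨?_, ?_, ?_, ?_⟩⟩⟩
  · exact
      { app := fun a => ((ht (cmk a)).2 a rfl).1.some
        naturality := fun a b f => (sub_hom t ht a (cmk b)).elim _ _ }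
  · exact
      { app := fun c => eqToHom (by
          obtain ⟨c⟩ := c
          exact congrArg Discrete.mk ((ht c).1))
        naturality := fun x y f => Subsingleton.elim _ _ }
  · ext a
    exact Subsingleton.elim _ _
  · ext c
    exact (sub_hom t ht _ _).elim _ _

end star_fun3

lemma isLeftAdjoint_to_star
    (h : (ConnectedComponents.functorToDiscrete (ConnectedComponents A)
      (id : ConnectedComponents A → ConnectedComponents A)).IsLeftAdjoint) : CatStar A := by
  obtain ⟨R, ⟨adj⟩⟩ := h
  intro c
  refine ⟨R.obj ⟨c⟩, ?_, fun a ha => ?_⟩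
  · exact Discrete.eq_of_hom (adj.counit.app ⟨c⟩)
  · have e := adj.homEquiv a (Discrete.mk c)
    constructor
    · exact ⟨e (eqToHom (by dsimp [ConnectedComponents.functorToDiscrete]; rw [ha]; rfl))⟩
    · constructor
      intro f g
      have h1 : e.symm f = e.symm g := Subsingleton.elim _ _
      simpa using congrArg e h1

open Limits in
lemma star_to_four (h : CatStar A) :
    ∃ (ι : Type u) (Cf : ι → Type u) (inst : ∀ i, SmallCategory (Cf i)),
      (∀ i, @Limits.HasTerminal (Cf i) (inst i)) ∧
        Nonempty (@CategoryTheory.Equivalence A (Σ i, Cf i) _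
          (@CategoryTheory.Sigma.sigma ι Cf inst)) := by
  obtain ⟨t, ht⟩ := h.exists_fun
  refine ⟨ConnectedComponents A, fun c => ConnectedComponents.Component c, fun c => inferInstance,
    fun c => ?_, ⟨decomposedEquiv.symm⟩⟩
  exact (IsTerminal.ofUniqueHom (Y := (⟨t c, (ht c).1⟩ : ConnectedComponents.Component c))
    (fun X => ObjectProperty.homMk ((ht c).2 X.obj X.2).1.some)
    (fun X m => ObjectProperty.hom_ext _ (((ht c).2 X.obj X.2).2.elim m.hom _))).hasTerminal

open Limits in
lemma four_to_star
    (h : ∃ (ι : Type u) (Cf : ι → Type u) (inst : ∀ i, SmallCategory (Cf i)),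
      (∀ i, @Limits.HasTerminal (Cf i) (inst i)) ∧
        Nonempty (@CategoryTheory.Equivalence A (Σ i, Cf i) _
          (@CategoryTheory.Sigma.sigma ι Cf inst))) : CatStar A := by
  obtain ⟨ι, Cf, inst, hterm, ⟨e⟩⟩ := h
  have hfst : ∀ {X Y : Σ i, Cf i} (f : X ⟶ Y), X.1 = Y.1 := by
    intro X Y f
    cases f using Sigma.SigmaHom.casesOn
    rfl
  have hzig : ∀ {X Y : Σ i, Cf i}, Zigzag X Y → X.1 = Y.1 := by
    intro X Y h
    induction h with
    | refl => rfl
    | tail _ hz ih =>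
      cases hz with
      | inl h => exact ih.trans (hfst h.some)
      | inr h => exact ih.trans (hfst h.some).symm
  have hsig : ∀ (i : ι) (X : Σ i, Cf i), X.1 = i →
      Nonempty (X ⟶ ⟨i, ⊤_ (Cf i)⟩) ∧ Subsingleton (X ⟶ (⟨i, ⊤_ (Cf i)⟩ : Σ i, Cf i)) := by
    rintro i ⟨j, x⟩ hX
    dsimp at hX
    subst hX
    constructor
    · exact ⟨Sigma.SigmaHom.mk (terminal.from x)⟩
    · constructor
      intro f g
      cases f using Sigma.SigmaHom.casesOn with
      | mk f' =>
        cases g using Sigma.SigmaHom.casesOn with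
        | mk g' => exact congrArg Sigma.SigmaHom.mk (Subsingleton.elim f' g')
  intro c
  obtain ⟨b, rfl⟩ := Quotient.exists_rep c
  set i := (e.functor.obj b).1 with hi
  have hbase := hsig i (e.functor.obj b) rfl
  have heq := e.toAdjunction.homEquiv b (⟨i, ⊤_ (Cf i)⟩ : Σ i, Cf i)
  refine ⟨e.inverse.obj ⟨i, ⊤_ (Cf i)⟩, (hom_mk_eq (heq hbase.1.some)).symm, fun a ha => ?_⟩
  have hsiga := hsig i (e.functor.obj a)
    ((hzig (zigzag_obj_of_zigzag e.functor (Quotient.exact ha))).trans hi.symm)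
  have ea := e.toAdjunction.homEquiv a (⟨i, ⊤_ (Cf i)⟩ : Σ i, Cf i)
  constructor
  · exact ⟨ea hsiga.1.some⟩
  · constructor
    intro f g
    have h1 : ea.symm f = ea.symm g := hsiga.2.elim _ _
    simpa using congrArg ea h1

/-- For a small category `A`, the following are equivalent:
(1) `A` has a discrete final full subcategory;
(2) `A` has a reflective discrete full subcategory;
(3) the connected-component functor `A ⟶ π₀(A)` has a right adjoint;
(4) `A` is equivalent to a disjoint union of categories each having a terminal object. -/
theorem stmt2 {A : Type u} [SmallCategory A] :
    [(∃ Z : A → Prop, IsDiscreteFullSubcat Z ∧ (ObjectProperty.ι Z).Final),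
     (∃ Z : A → Prop, IsDiscreteFullSubcat Z ∧
        (ObjectProperty.ι Z).IsRightAdjoint),
     (ConnectedComponents.functorToDiscrete (ConnectedComponents A)
        (id : ConnectedComponents A → ConnectedComponents A)).IsLeftAdjoint,
     (∃ (ι : Type u) (Cf : ι → Type u) (inst : ∀ i, SmallCategory (Cf i)),
        (∀ i, @Limits.HasTerminal (Cf i) (inst i)) ∧
          Nonempty (@CategoryTheory.Equivalence A (Σ i, Cf i) _
            (@CategoryTheory.Sigma.sigma ι Cf inst)))].TFAE := by
  tfae_have 1 → 2
  | ⟨Z, hd, hf⟩ => by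
    obtain ⟨t, ht⟩ := (final_to_star Z hd hf).exists_fun
    exact ⟨_, star_discrete t ht, star_isRightAdjoint t ht⟩
  tfae_have 2 → 3
  | ⟨Z, hd, hra⟩ => by
    obtain ⟨t, ht⟩ := (isRightAdjoint_to_star Z hd hra).exists_fun
    exact star_isLeftAdjoint t ht
  tfae_have 3 → 4 := fun h => star_to_four (isLeftAdjoint_to_star h)
  tfae_have 4 → 1
  | h => by
    obtain ⟨t, ht⟩ := (four_to_star h).exists_fun
    exact ⟨_, star_discrete t ht, star_final t ht⟩
  tfae_finish
end

section
/- The class of final functors between small categories is closed under pushout: if u : A ⟶ B is a final functor and f : A ⟶ C is any functor, then the pushout C ⟶ B ⊔_A C of u along f in the category of small categories is a final functor. -/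
open CategoryTheory

universe u

namespace Stmt4Aux

open Opposite

variable {P : Type u} [Category.{u} P]

/-- Category of elements of a presheaf `G : Pᵒᵖ ⥤ Type u`, fibered over `P`. -/
structure El (G : Pᵒᵖ ⥤ Type u) where
  base : P
  el : G.obj (op base)

variable {G : Pᵒᵖ ⥤ Type u}

instance : Category (El G) where
  Hom x y := { f : x.base ⟶ y.base // G.map f.op y.el = x.el }
  id x := ⟨𝟙 x.base, by simp⟩
  comp {x y z} f g := ⟨f.1 ≫ g.1, by rw [op_comp, G.map_comp]; simp [f.2, g.2]⟩

@[ext]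
lemma El.hom_ext {x y : El G} {f g : x ⟶ y} (h : f.1 = g.1) : f = g := Subtype.ext h

@[simp] lemma El.id_val (x : El G) : (𝟙 x : x ⟶ x).1 = 𝟙 x.base := rfl
@[simp] lemma El.comp_val {x y z : El G} (f : x ⟶ y) (g : y ⟶ z) :
    (f ≫ g).1 = f.1 ≫ g.1 := rfl

lemma El.hom_prop {x y : El G} (f : x ⟶ y) : G.map f.1.op y.el = x.el := f.2

/-- The projection to the base. -/
def El.π (G : Pᵒᵖ ⥤ Type u) : El G ⥤ P where
  obj x := x.base
  map f := f.1

@[simp] lemma El.π_obj (x : El G) : (El.π G).obj x = x.base := rfl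
@[simp] lemma El.π_map {x y : El G} (f : x ⟶ y) : (El.π G).map f = f.1 := rfl

lemma El.obj_ext {p q : El G} (h1 : p.base = q.base)
    (h2 : G.map (eqToHom (congrArg op h1.symm)) q.el = p.el) : p = q := by
  cases p; cases q
  cases h1
  simp only [eqToHom_refl, G.map_id, types_id_apply] at h2
  cases h2
  rfl

lemma eqToHom_apply_trans {X Y Z : Type u} (h1 : X = Y) (h2 : Y = Z) (x : X) :
    eqToHom h2 (eqToHom h1 x) = eqToHom (h1.trans h2) x := by cases h1; cases h2; rfl

lemma El.el_of_eq {p q : El G} (h : p = q) :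
    p.el = G.map (eqToHom (congrArg op (congrArg El.base h).symm)) q.el := by
  cases h; simp

lemma El.eqToHom_val {p q : El G} (h : p = q) :
    (eqToHom h : p ⟶ q).1 = eqToHom (congrArg El.base h) := by
  cases h; rfl

lemma map_eqToHom_aux1 {X Y X' Y' : P} (p : X = Y) (p' : X' = Y') (T : Y ⟶ Y')
    (v : G.obj (op X')) :
    G.map T.op (G.map (eqToHom (congrArg op p')) v) =
      G.map (eqToHom (congrArg op p)) (G.map (eqToHom p ≫ T ≫ eqToHom p'.symm).op v) := by
  subst p p'; simp

lemma map_eqToHom_aux2 {Mb Tb X' Y' Z : P} (q : Mb = Tb) (p' : X' = Y') (s : Y' = Z)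
    (r : Z = X') (T : Tb ⟶ Y') (v : G.obj (op X')) :
    G.map (eqToHom (congrArg op q.symm)) (G.map T.op (G.map (eqToHom (congrArg op p')) v)) =
      G.map (eqToHom q ≫ T ≫ eqToHom s).op (G.map (eqToHom (congrArg op r.symm)) v) := by
  subst q p' s; simp

lemma eqToHom_conj_aux {X Y X' Y' : P} (p1 : X = Y) (p2 : Y = X) (q1 : X' = Y')
    (q2 : Y' = X') (T : X ⟶ X') :
    T = eqToHom p1 ≫ eqToHom p2 ≫ T ≫ eqToHom q1 ≫ eqToHom q2 := by
  subst p1 q1; simp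

end Stmt4Aux

open Stmt4Aux Opposite

section Lifting

variable {A B P : Type u} [Category.{u} A] [Category.{u} B] [Category.{u} P]
variable (u : A ⥤ B) [u.Final] (G : Pᵒᵖ ⥤ Type u)
variable (σ : A ⥤ El G) (τ : B ⥤ P) (hsq : σ ⋙ El.π G = u ⋙ τ)

namespace Stmt4Lift

/-- Transport of `(σ.obj a).el` to the fiber over `τ.obj (u.obj a)`. -/
noncomputable def y (a : A) : G.obj (op (τ.obj (u.obj a))) :=
  G.map (eqToHom (congrArg op (Functor.congr_obj hsq a))) (σ.obj a).el

noncomputable def key (b : B) (j : CategoryTheory.StructuredArrow b u) :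
    G.obj (op (τ.obj b)) :=
  G.map (τ.map j.hom).op (y u G σ τ hsq j.right)

lemma y_nat {a a' : A} (t : a ⟶ a') :
    G.map (τ.map (u.map t)).op (y u G σ τ hsq a') = y u G σ τ hsq a := by
  have h2 := El.hom_prop (σ.map t)
  have h3 := Functor.congr_hom hsq t
  simp only [Functor.comp_map, El.π_map] at h3
  rw [y, y, ← h2, h3]
  exact map_eqToHom_aux1 (Functor.congr_obj hsq a) (Functor.congr_obj hsq a') _ _

lemma key_const (b : B) (j j' : CategoryTheory.StructuredArrow b u) :
    key u G σ τ hsq b j = key u G σ τ hsq b j' := by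
  haveI : IsConnected (CategoryTheory.StructuredArrow b u) := Functor.Final.out b
  apply constant_of_preserves_morphisms
  intro k k' t
  simp only [key]
  rw [← CategoryTheory.StructuredArrow.w t, τ.map_comp, op_comp,
    FunctorToTypes.map_comp_apply, y_nat]

noncomputable def x (b : B) : G.obj (op (τ.obj b)) :=
  key u G σ τ hsq b (Classical.arbitrary _)

lemma x_eq (b : B) (j : CategoryTheory.StructuredArrow b u) :
    x u G σ τ hsq b = key u G σ τ hsq b j :=
  key_const u G σ τ hsq b _ j

lemma x_nat {b b' : B} (φ : b ⟶ b') :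
    G.map (τ.map φ).op (x u G σ τ hsq b') = x u G σ τ hsq b := by
  obtain ⟨j'⟩ : Nonempty (CategoryTheory.StructuredArrow b' u) := inferInstance
  rw [x_eq u G σ τ hsq b' j', x_eq u G σ τ hsq b (CategoryTheory.StructuredArrow.mk (φ ≫ j'.hom))]
  simp only [key]
  rw [← FunctorToTypes.map_comp_apply, ← op_comp, ← τ.map_comp]
  rfl

/-- The lift. -/
noncomputable def ℓ : B ⥤ El G where
  obj b := ⟨τ.obj b, x u G σ τ hsq b⟩
  map φ := ⟨τ.map φ, x_nat u G σ τ hsq φ⟩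
  map_id b := by ext; simp
  map_comp f g := by ext; simp

lemma ℓ_π : ℓ u G σ τ hsq ⋙ El.π G = τ :=
  CategoryTheory.Functor.ext (fun b => rfl) (fun _ _ _ => by
    show _ = 𝟙 _ ≫ τ.map _ ≫ 𝟙 _
    rw [Category.id_comp, Category.comp_id]; rfl)

lemma ℓ_obj_u (a : A) : (ℓ u G σ τ hsq).obj (u.obj a) = σ.obj a := by
  apply El.obj_ext (Functor.congr_obj hsq a).symm
  show G.map _ (σ.obj a).el = x u G σ τ hsq (u.obj a)
  rw [x_eq u G σ τ hsq (u.obj a) (CategoryTheory.StructuredArrow.mk (𝟙 (u.obj a)))]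
  simp [key, y]
  rfl

lemma u_ℓ : u ⋙ ℓ u G σ τ hsq = σ := by
  refine CategoryTheory.Functor.ext (ℓ_obj_u u G σ τ hsq) ?_
  intro a a' t
  apply El.hom_ext
  have h3 := Functor.congr_hom hsq t
  simp only [Functor.comp_map, El.π_map] at h3
  simp only [El.comp_val, El.eqToHom_val]
  simp [El.eqToHom_val, h3, ℓ]
  exact eqToHom_conj_aux _ _ _ _ _

lemma m_obj (m : B ⥤ El G) (h1 : u ⋙ m = σ) (h2 : m ⋙ El.π G = τ) (b : B) :
    m.obj b = (ℓ u G σ τ hsq).obj b := by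
  haveI : IsConnected (CategoryTheory.StructuredArrow b u) := Functor.Final.out b
  obtain ⟨j⟩ : Nonempty (CategoryTheory.StructuredArrow b u) := inferInstance
  refine El.obj_ext (Functor.congr_obj h2 b) ?_
  show G.map _ (x u G σ τ hsq b) = (m.obj b).el
  rw [x_eq u G σ τ hsq b j]
  have hφ : G.map (m.map j.hom).1.op ((m.obj (u.obj j.right)).el) = (m.obj b).el :=
    El.hom_prop (m.map j.hom)
  have hmo : m.obj (u.obj j.right) = σ.obj j.right := Functor.congr_obj h1 j.right
  have hval := Functor.congr_hom h2 j.hom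
  simp only [Functor.comp_map, El.π_map] at hval
  rw [← hφ]
  simp only [El.el_of_eq hmo, hval]
  exact map_eqToHom_aux2 (Functor.congr_obj h2 b) (Functor.congr_obj hsq j.right)
    (Functor.congr_obj h2 (u.obj j.right)).symm (congrArg El.base hmo) _ _

lemma lift_unique (m : B ⥤ El G) (h1 : u ⋙ m = σ) (h2 : m ⋙ El.π G = τ) :
    m = ℓ u G σ τ hsq := by
  refine CategoryTheory.Functor.ext (m_obj u G σ τ hsq m h1 h2) ?_
  intro b b' φ
  apply El.hom_ext
  have hval := Functor.congr_hom h2 φ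
  simp only [Functor.comp_map, El.π_map] at hval
  simp only [El.comp_val, El.eqToHom_val]
  simp [El.eqToHom_val, hval, ℓ]

end Stmt4Lift

end Lifting

section Factorization

variable {C P : Type u} [Category.{u} C] [Category.{u} P] (F : C ⥤ P)

namespace Stmt4Fac

/-- The relation on the comma data. -/
def r (b : P) : (Σ a : C, b ⟶ F.obj a) → (Σ a : C, b ⟶ F.obj a) → Prop :=
  fun x y => ∃ t : x.1 ⟶ y.1, x.2 ≫ F.map t = y.2

/-- `π₀` of comma categories, as a presheaf. -/
def G : Pᵒᵖ ⥤ Type u where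
  obj b := Quot (r F b.unop)
  map {b b'} φ := TypeCat.ofHom (Quot.lift (fun x => Quot.mk (r F b'.unop) ⟨x.1, φ.unop ≫ x.2⟩)
    (by rintro x y ⟨t, ht⟩; exact Quot.sound ⟨t, by rw [Category.assoc, ht]⟩))
  map_id b := by
    refine ConcreteCategory.hom_ext _ _ fun q => ?_; induction q using Quot.ind; simp
  map_comp {b b' b''} φ ψ := by
    refine ConcreteCategory.hom_ext _ _ fun q => ?_; induction q using Quot.ind; simp

/-- The first factor. -/
def e : C ⥤ El (G F) where
  obj c := ⟨F.obj c, Quot.mk _ ⟨c, 𝟙 (F.obj c)⟩⟩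
  map {c c'} φ := ⟨F.map φ, (Quot.sound ⟨φ, by simp⟩).symm⟩
  map_id c := by ext; simp
  map_comp f g := by ext; simp

lemma e_π : e F ⋙ El.π (G F) = F :=
  CategoryTheory.Functor.ext (fun c => rfl) (fun _ _ _ => by
    show _ = 𝟙 _ ≫ F.map _ ≫ 𝟙 _
    rw [Category.id_comp, Category.comp_id]; rfl)

def mkObj (X : El (G F)) (p : Σ a : C, X.base ⟶ F.obj a)
    (hp : Quot.mk (r F X.base) p = X.el) :
    CategoryTheory.StructuredArrow X (e F) :=
  CategoryTheory.StructuredArrow.mk (Y := p.1)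
    ⟨p.2, by
      show Quot.mk _ ⟨p.1, p.2 ≫ 𝟙 _⟩ = X.el
      rw [← hp]
      exact congrArg (Quot.mk _) (by simp)⟩

lemma zig (X : El (G F)) :
    ∀ (p p' : Σ a : C, X.base ⟶ F.obj a), Relation.EqvGen (r F X.base) p p' →
    ∀ (hp : Quot.mk (r F X.base) p = X.el) (hp' : Quot.mk (r F X.base) p' = X.el),
    Zigzag (mkObj F X p hp) (mkObj F X p' hp') := by
  intro p p' hgen
  induction hgen with
  | rel p q hr =>
      intro hp hq
      obtain ⟨t, ht⟩ := hr
      refine Relation.ReflTransGen.single (Or.inl ⟨CategoryTheory.StructuredArrow.homMk t ?_⟩)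
      apply El.hom_ext
      simpa [mkObj, e] using ht
  | refl p => intro hp hq; exact Relation.ReflTransGen.refl
  | symm p q h ih => intro hp hq; exact (ih hq hp).symm
  | trans p q r' h1 h2 ih1 ih2 =>
      intro hp hr
      have hq : Quot.mk (r F X.base) q = X.el := (Quot.eq.mpr h1).symm.trans hp
      exact (ih1 hp hq).trans (ih2 hq hr)

lemma hom_quot {X : El (G F)} (j : CategoryTheory.StructuredArrow X (e F)) :
    Quot.mk (r F X.base) ⟨j.right, j.hom.1⟩ = X.el := by
  have h2 : Quot.mk (r F X.base) ⟨j.right, j.hom.1 ≫ 𝟙 _⟩ = X.el := j.hom.2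
  refine Eq.trans ?_ h2
  exact congrArg (Quot.mk _) (congrArg (Sigma.mk j.right) (Category.comp_id _).symm)

lemma eq_mkObj {X : El (G F)} (j : CategoryTheory.StructuredArrow X (e F)) :
    j = mkObj F X ⟨j.right, j.hom.1⟩ (hom_quot F j) := by
  rw [CategoryTheory.StructuredArrow.eq_mk j]
  have : (⟨j.hom.1, (mkObj F X ⟨j.right, j.hom.1⟩ (hom_quot F j)).hom.2⟩ :
      X ⟶ (e F).obj j.right) = j.hom := El.hom_ext rfl
  rw [← this]
  rfl

instance e_final : (e F).Final := by
  constructor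
  intro X
  obtain ⟨p₀, hp₀⟩ := Quot.exists_rep X.el
  haveI : Nonempty (CategoryTheory.StructuredArrow X (e F)) := ⟨mkObj F X p₀ hp₀⟩
  apply zigzag_isConnected
  intro j j'
  rw [eq_mkObj F j, eq_mkObj F j']
  exact zig F X _ _ (Quot.eq.mp ((hom_quot F j).trans (hom_quot F j').symm)) _ _

end Stmt4Fac

end Factorization

/-- Final functors between small categories are closed under pushout in `Cat`: if
`u : A ⟶ B` is final and `f : A ⟶ C` is any functor, then in any pushout square
`IsPushout u f g h` the functor `h : C ⟶ B ⊔_A C` is final. -/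
theorem stmt4 {A B C P : Cat.{u, u}} (u : A ⟶ B) (f : A ⟶ C) (g : B ⟶ P) (h : C ⟶ P)
    (hpo : IsPushout u f g h) (hu : Functor.Final u.toFunctor) : Functor.Final h.toFunctor := by
  haveI := hu
  let Gp := Stmt4Fac.G (h.toFunctor : ↥C ⥤ ↥P)
  let e : ↥C ⥤ El Gp := Stmt4Fac.e (h.toFunctor : ↥C ⥤ ↥P)
  have he : e ⋙ El.π Gp = (h.toFunctor : ↥C ⥤ ↥P) := Stmt4Fac.e_π _
  have hsq : (f.toFunctor ⋙ e) ⋙ El.π Gp = (u.toFunctor : ↥A ⥤ ↥B) ⋙ g.toFunctor := by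
    rw [Functor.assoc, he]
    exact (congrArg Cat.Hom.toFunctor hpo.w).symm
  let ℓ : ↥B ⥤ El Gp := Stmt4Lift.ℓ u.toFunctor Gp (f.toFunctor ⋙ e) g.toFunctor hsq
  have hℓ1 : (u.toFunctor : ↥A ⥤ ↥B) ⋙ ℓ = f.toFunctor ⋙ e :=
    Stmt4Lift.u_ℓ u.toFunctor Gp (f.toFunctor ⋙ e) g.toFunctor hsq
  have hℓ2 : ℓ ⋙ El.π Gp = (g.toFunctor : ↥B ⥤ ↥P) :=
    Stmt4Lift.ℓ_π u.toFunctor Gp (f.toFunctor ⋙ e) g.toFunctor hsq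
  let E : Cat.{u, u} := Cat.of (El Gp)
  let s : P ⟶ E := hpo.desc (ℓ.toCatHom : B ⟶ E) (e.toCatHom : C ⟶ E) (Cat.ext hℓ1)
  have hs1 : g ≫ s = (ℓ.toCatHom : B ⟶ E) := hpo.inl_desc _ _ _
  have hs2 : h ≫ s = (e.toCatHom : C ⟶ E) := hpo.inr_desc _ _ _
  let π : E ⟶ P := (El.π Gp).toCatHom
  have hret : s ≫ π = 𝟙 P := by
    apply hpo.hom_ext
    · rw [← Category.assoc, hs1, Category.comp_id]
      exact Cat.ext hℓ2
    · rw [← Category.assoc, hs2, Category.comp_id]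
      exact Cat.ext he
  have hsec : π ≫ s = 𝟙 E := by
    have hA : (El.π Gp ⋙ (s.toFunctor : ↥P ⥤ El Gp) : El Gp ⥤ El Gp) =
        Stmt4Lift.ℓ e Gp e (El.π Gp) rfl := by
      apply Stmt4Lift.lift_unique
      · exact congrArg Cat.Hom.toFunctor (show (e.toCatHom : C ⟶ E) ≫ π ≫ s = e.toCatHom by
          rw [← Category.assoc, show (e.toCatHom : C ⟶ E) ≫ π = h from Cat.ext he]; exact hs2)
      · exact congrArg Cat.Hom.toFunctor (show (π ≫ s) ≫ π = π by
          rw [Category.assoc, hret, Category.comp_id])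
    have hB : (𝟭 (El Gp)) = Stmt4Lift.ℓ e Gp e (El.π Gp) rfl := by
      apply Stmt4Lift.lift_unique
      · exact Functor.comp_id _
      · exact Functor.id_comp _
    apply Cat.ext
    show (El.π Gp ⋙ (s.toFunctor : ↥P ⥤ El Gp) : El Gp ⥤ El Gp) = 𝟭 (El Gp)
    rw [hA, hB]
  have hiso : IsIso π := ⟨s, hsec, hret⟩
  let γ : E ≅ P := ⟨π, s, hsec, hret⟩
  haveI : Functor.IsEquivalence (El.π Gp) := (Cat.equivOfIso γ).isEquivalence_functor
  haveI : Functor.Final e := Stmt4Fac.e_final _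
  have : Functor.Final (e ⋙ El.π Gp) := Functor.final_comp_equivalence _ _
  rw [he] at this
  exact this
end

section
/- In any fundamental localiser W, every W-aspherical functor is a W-equivalence: if u : A ⟶ B is a functor between small categories such that for every object b of B the comma category u/b is W-aspherical (i.e. u/b ⟶ 1 belongs to W), then u belongs to W. -/
open CategoryTheory

universe u

/-- The unique functor to the terminal category, as a morphism in `Cat`. -/
def toPt (X : Cat.{u, u}) : X ⟶ Cat.of (Discrete PUnit.{u + 1}) :=
  (Functor.star X).toCatHom

/-- A fundamental localiser: a class of functors between small categories containing
identities, satisfying two-out-of-three, the retract axiom, containing `A ⟶ 1` whenever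
`A` has a terminal object, and local on the base: for a triangle `u : A ⟶ B` over `C`,
if all induced functors `u/c : A/c ⟶ B/c` are in `W`, then `u ∈ W`. -/
structure IsFundamentalLocaliser (W : ∀ ⦃X Y : Cat.{u, u}⦄, (X ⟶ Y) → Prop) : Prop where
  id_mem : ∀ X : Cat.{u, u}, W (𝟙 X)
  comp_mem : ∀ {X Y Z : Cat.{u, u}} (f : X ⟶ Y) (g : Y ⟶ Z), W f → W g → W (f ≫ g)
  of_comp_left : ∀ {X Y Z : Cat.{u, u}} (f : X ⟶ Y) (g : Y ⟶ Z),
    W f → W (f ≫ g) → W g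
  of_comp_right : ∀ {X Y Z : Cat.{u, u}} (f : X ⟶ Y) (g : Y ⟶ Z),
    W g → W (f ≫ g) → W f
  retract : ∀ {X Y : Cat.{u, u}} (i : X ⟶ Y) (r : Y ⟶ X),
    i ≫ r = 𝟙 X → W (r ≫ i) → W i
  terminal_mem : ∀ X : Cat.{u, u}, Limits.HasTerminal X → W (toPt X)
  locality : ∀ {X Y Z : Cat.{u, u}} (f : X ⟶ Y) (w : Y ⟶ Z),
    (∀ c : Z, W (X := Cat.of (CostructuredArrow (f.toFunctor ⋙ w.toFunctor) c))
      (Y := Cat.of (CostructuredArrow w.toFunctor c))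
      (CostructuredArrow.pre f.toFunctor w.toFunctor c).toCatHom) →
    W f

/-- In any fundamental localiser `W`, every `W`-aspherical functor is a `W`-equivalence:
if for every `b : B` the comma category `u/b` is `W`-aspherical (`u/b ⟶ 1` is in `W`),
then `u ∈ W`. -/
theorem stmt5 (W : ∀ ⦃X Y : Cat.{u, u}⦄, (X ⟶ Y) → Prop)
    (hW : IsFundamentalLocaliser W) {A B : Cat.{u, u}} (u : A ⟶ B)
    (hasp : ∀ b : B, W (toPt (Cat.of (CostructuredArrow u.toFunctor b)))) :
    W u := by
  apply hW.locality u (𝟙 B)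
  intro c
  have ht : W (toPt (Cat.of (CostructuredArrow (𝟙 B : B ⟶ B).toFunctor c))) := by
    apply hW.terminal_mem
    exact Limits.IsTerminal.hasTerminal
      (CostructuredArrow.mkIdTerminal (S := Functor.id B) (Y := c))
  have hs : W (toPt (Cat.of (CostructuredArrow (u.toFunctor ⋙ (𝟙 B : B ⟶ B).toFunctor) c))) := hasp c
  have hcomp : ((CostructuredArrow.pre u.toFunctor (𝟙 B : B ⟶ B).toFunctor c).toCatHom :
      Cat.of (CostructuredArrow (u.toFunctor ⋙ (𝟙 B : B ⟶ B).toFunctor) c) ⟶ Cat.of (CostructuredArrow (𝟙 B : B ⟶ B).toFunctor c)) ≫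
      toPt (Cat.of (CostructuredArrow (𝟙 B : B ⟶ B).toFunctor c)) =
      toPt (Cat.of (CostructuredArrow (u.toFunctor ⋙ (𝟙 B : B ⟶ B).toFunctor) c)) :=
    Cat.ext (Functor.punit_ext' _ _)
  exact hW.of_comp_right _ _ ht (hcomp ▸ hs)
end
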